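/- arXiv:1908.01669 — 2 statements merged into one kernel-verified Lean document; each statement's English description precedes it below -/
import Mathlib

section
/- For any allocation z of m objects among n agents, there exists a fractionally Pareto-optimal allocation z* such that (a) u_i(z*_i) ≥ u_i(z_i) for every agent i, (b) the undirected bipartite consumption graph of z* (edge between agent i and object o iff z*_{i,o} > 0) is acyclic, and (c) z* has at most n−1 sharings. -/
/-!
Among the allocations that every agent weakly prefers to `z` (a compact set), take one that
maximizes utilitarian welfare and, among the welfare maximizers, an extreme point `y`
(Krein–Milman). Welfare maximality makes `y` fractionally Pareto-optimal and makes every transfer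
within the support of `y` that harms nobody utility-neutral; extremality then forces such a
transfer to vanish. Hence, for every nonempty set `E` of positive entries of `y`, the linear map
sending a matrix supported on `E` to its column sums (over the objects of `E`) and its utilities
(for the agents of `E`) is injective and misses `(0, 1)`, so `#E` is smaller than the number of
agents and objects that `E` touches. For `E` the whole support this bounds the sharings by
`n - 1`; for `E` the edges of a cycle, which touch exactly as many vertices as there are edges,
it is absurd.
-/

open Finset

/-- An allocation: nonnegative matrix with column sums 1. -/
def IsAllocation {n m : ℕ} (z : Fin n → Fin m → ℝ) : Prop :=
  (∀ i o, 0 ≤ z i o) ∧ ∀ o, ∑ i, z i o = 1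

/-- Additive utility of agent `i` at allocation `z`. -/
def utility {n m : ℕ} (v z : Fin n → Fin m → ℝ) (i : Fin n) : ℝ :=
  ∑ o, v i o * z i o

/-- Fractional Pareto optimality: no feasible allocation weakly improves everyone
and strictly improves someone. -/
def IsFPO {n m : ℕ} (v z : Fin n → Fin m → ℝ) : Prop :=
  ¬ ∃ y, IsAllocation y ∧ (∀ i, utility v z i ≤ utility v y i) ∧
    ∃ i, utility v z i < utility v y i

/-- Number of sharings of allocation `z`. -/
noncomputable def sharings {n m : ℕ} (z : Fin n → Fin m → ℝ) : ℕ :=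
  ∑ o : Fin m, ((Finset.univ.filter (fun i : Fin n => 0 < z i o)).card - 1)

/-- The undirected bipartite consumption graph of an allocation. -/
def consGraph {n m : ℕ} (z : Fin n → Fin m → ℝ) : SimpleGraph (Fin n ⊕ Fin m) where
  Adj x y :=
    (∃ i o, x = Sum.inl i ∧ y = Sum.inr o ∧ 0 < z i o) ∨
    (∃ i o, x = Sum.inr o ∧ y = Sum.inl i ∧ 0 < z i o)
  symm := by
    constructor
    rintro x y (⟨i, o, rfl, rfl, h⟩ | ⟨i, o, rfl, rfl, h⟩)
    · exact Or.inr ⟨i, o, rfl, rfl, h⟩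
    · exact Or.inl ⟨i, o, rfl, rfl, h⟩
  loopless := by
    constructor
    rintro x (⟨i, o, rfl, h, -⟩ | ⟨i, o, rfl, h, -⟩) <;> simp at h

open Filter Topology

theorem IsCompact.setOf_isMaxOn {α β : Type*} [TopologicalSpace α] [TopologicalSpace β]
    [LinearOrder β] [OrderClosedTopology β] {s : Set α} {f : α → β} (hs : IsCompact s)
    (hf : Continuous f) : IsCompact {x ∈ s | IsMaxOn f s x} := by
  have : {x ∈ s | IsMaxOn f s x} = s ∩ ⋂ y ∈ s, {x | f y ≤ f x} := by
    ext x; simp [isMaxOn_iff]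
  rw [this]
  exact hs.inter_right (isClosed_biInter fun y _ => isClosed_le continuous_const hf)

theorem SimpleGraph.Walk.IsCycle.card_toFinset_support {V : Type*} [DecidableEq V]
    {G : SimpleGraph V} {a : V} {c : G.Walk a a} (hc : c.IsCycle) :
    #c.support.toFinset = c.length := by
  rw [← c.cons_tail_support, List.toFinset_cons,
    insert_eq_of_mem (List.mem_toFinset.2 (c.end_mem_tail_support hc.not_nil)),
    List.toFinset_card_of_nodup hc.support_nodup, List.length_tail, c.length_support]
  rfl

section ExtendByZero

variable {R α β : Type*} [Semiring R] [DecidableEq α] [DecidableEq β]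

def extendByZero (E : Finset (α × β)) : (E → R) →ₗ[R] α → β → R where
  toFun g i o := if h : (i, o) ∈ E then g ⟨(i, o), h⟩ else 0
  map_add' g h := by ext i o; by_cases hio : (i, o) ∈ E <;> simp [hio]
  map_smul' c g := by ext i o; by_cases hio : (i, o) ∈ E <;> simp [hio]

variable {E : Finset (α × β)}

theorem extendByZero_apply_of_notMem (g : E → R) {i : α} {o : β} (h : (i, o) ∉ E) :
    extendByZero E g i o = 0 :=
  dif_neg h

theorem extendByZero_injective : Function.Injective (extendByZero (R := R) E) := by
  intro g h hgh
  funext q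
  simpa [extendByZero] using congr_fun₂ hgh q.1.1 q.1.2

end ExtendByZero

section Allocations

variable {n m : ℕ}

@[simp]
theorem utility_zero (v : Fin n → Fin m → ℝ) (i : Fin n) : utility v 0 i = 0 := by
  simp [utility]

theorem utility_add_smul (v y d : Fin n → Fin m → ℝ) (t : ℝ) (i : Fin n) :
    utility v (y + t • d) i = utility v y i + t * utility v d i := by
  simp only [utility, Pi.add_apply, Pi.smul_apply, smul_eq_mul, mul_add, sum_add_distrib, mul_sum]
  congr 1
  exact sum_congr rfl fun o _ => by ring

theorem continuous_utility (v : Fin n → Fin m → ℝ) (i : Fin n) :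
    Continuous fun y => utility v y i := by
  unfold utility; fun_prop

def welfare (v y : Fin n → Fin m → ℝ) : ℝ := ∑ i, utility v y i

theorem welfare_add_smul (v y d : Fin n → Fin m → ℝ) (t : ℝ) :
    welfare v (y + t • d) = welfare v y + t * welfare v d := by
  simp only [welfare, utility_add_smul, sum_add_distrib, mul_sum]

theorem continuous_welfare (v : Fin n → Fin m → ℝ) : Continuous (welfare v) :=
  continuous_finsetSum _ fun i _ => continuous_utility v i

theorem isCompact_setOf_isAllocation : IsCompact {y : Fin n → Fin m → ℝ | IsAllocation y} := by
  have hclosed : IsClosed {y : Fin n → Fin m → ℝ | IsAllocation y} := by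
    simp only [IsAllocation, Set.ofPred_and, Set.ofPred_forall]
    exact (isClosed_iInter fun i => isClosed_iInter fun o =>
        isClosed_le continuous_const (by fun_prop)).inter
      (isClosed_iInter fun o => isClosed_eq (by fun_prop) continuous_const)
  refine (isCompact_Icc (a := 0) (b := 1)).of_isClosed_subset hclosed fun y hy =>
    ⟨fun i o => hy.1 i o, fun i o => ?_⟩
  calc y i o ≤ ∑ j, y j o := single_le_sum (fun j _ => hy.1 j o) (mem_univ i)
    _ = 1 := hy.2 o

def dominatingAllocations (v z : Fin n → Fin m → ℝ) : Set (Fin n → Fin m → ℝ) :=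
  {y | IsAllocation y ∧ ∀ i, utility v z i ≤ utility v y i}

theorem isCompact_dominatingAllocations (v z : Fin n → Fin m → ℝ) :
    IsCompact (dominatingAllocations v z) := by
  have : dominatingAllocations v z =
      {y | IsAllocation y} ∩ ⋂ i, {y | utility v z i ≤ utility v y i} := by
    ext y; simp [dominatingAllocations]
  rw [this]
  exact isCompact_setOf_isAllocation.inter_right
    (isClosed_iInter fun i => isClosed_le continuous_const (continuous_utility v i))

theorem eventually_isAllocation_add_smul {y d : Fin n → Fin m → ℝ} (hy : IsAllocation y)
    (hd : ∀ i o, d i o ≠ 0 → 0 < y i o) (hcol : ∀ o, ∑ i, d i o = 0) :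
    ∀ᶠ t in 𝓝 (0 : ℝ), IsAllocation (y + t • d) := by
  have hsum (t : ℝ) (o : Fin m) : ∑ i, (y + t • d) i o = 1 := by
    simp [sum_add_distrib, ← mul_sum, hy.2 o, hcol o]
  have hnonneg (i : Fin n) (o : Fin m) : ∀ᶠ t in 𝓝 (0 : ℝ), 0 ≤ (y + t • d) i o := by
    by_cases hdio : d i o = 0
    · exact Eventually.of_forall fun t => by simp [hdio, hy.1 i o]
    · have : Tendsto (fun t : ℝ => y i o + t * d i o) (𝓝 0) (𝓝 (y i o)) :=
        (by fun_prop : Continuous fun t : ℝ => y i o + t * d i o).tendsto' 0 _ (by simp)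
      exact (this.eventually_const_lt (hd i o hdio)).mono fun t ht => ht.le
  filter_upwards [eventually_all.2 fun i => eventually_all.2 (hnonneg i)] with t ht
  exact ⟨ht, hsum t⟩

theorem isFPO_of_isMaxOn_welfare {v z y : Fin n → Fin m → ℝ} (hy : y ∈ dominatingAllocations v z)
    (hmax : IsMaxOn (welfare v) (dominatingAllocations v z) y) : IsFPO v y := by
  rintro ⟨x, hx, hle, i, hlt⟩
  have hxy : welfare v x ≤ welfare v y := hmax ⟨hx, fun j => (hy.2 j).trans (hle j)⟩
  exact hxy.not_gt (sum_lt_sum (fun j _ => hle j) ⟨i, mem_univ i, hlt⟩)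

def NoHarmlessTransfer (v y : Fin n → Fin m → ℝ) : Prop :=
  ∀ d : Fin n → Fin m → ℝ, (∀ i o, d i o ≠ 0 → 0 < y i o) → (∀ o, ∑ i, d i o = 0) →
    (∀ i, 0 ≤ utility v d i) → d = 0

theorem noHarmlessTransfer_of_mem_extremePoints {v z y : Fin n → Fin m → ℝ}
    (hy : y ∈ {x ∈ dominatingAllocations v z |
      IsMaxOn (welfare v) (dominatingAllocations v z) x}.extremePoints ℝ) :
    NoHarmlessTransfer v y := by
  obtain ⟨⟨⟨hyalloc, hdom⟩, hmax⟩, hext⟩ := hy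
  intro d hd hcol hut
  obtain ⟨δ, hδ, hδall⟩ :=
    Metric.eventually_nhds_iff.1 (eventually_isAllocation_add_smul hyalloc hd hcol)
  have hshift {t : ℝ} (ht : |t| < δ) : IsAllocation (y + t • d) := hδall (by simpa using ht)
  have hneutral : ∀ i, utility v d i = 0 := by
    have hup : y + (δ / 2) • d ∈ dominatingAllocations v z :=
      ⟨hshift (by rw [abs_of_pos (half_pos hδ)]; linarith), fun i => by
        rw [utility_add_smul]; nlinarith [hdom i, hut i]⟩
    have hle : welfare v (y + (δ / 2) • d) ≤ welfare v y := hmax hup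
    rw [welfare_add_smul] at hle
    have hW : welfare v d = 0 :=
      le_antisymm (nonpos_of_mul_nonpos_right (by linarith) (half_pos hδ))
        (sum_nonneg fun i _ => hut i)
    exact fun i => (sum_eq_zero_iff_of_nonneg fun j _ => hut j).1 hW i (mem_univ i)
  have hmem {t : ℝ} (ht : |t| < δ) : y + t • d ∈
      {x ∈ dominatingAllocations v z | IsMaxOn (welfare v) (dominatingAllocations v z) x} := by
    have hu i : utility v (y + t • d) i = utility v y i := by
      rw [utility_add_smul, hneutral, mul_zero, add_zero]
    have hW : welfare v (y + t • d) = welfare v y := sum_congr rfl fun i _ => hu i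
    exact ⟨⟨hshift ht, fun i => (hdom i).trans_eq (hu i).symm⟩,
      fun x hx => (hmax hx).trans_eq hW.symm⟩
  have hhalf : |δ / 2| < δ := by rw [abs_of_pos (half_pos hδ)]; linarith
  have heq := hext (hmem hhalf) (hmem (t := -(δ / 2)) (by rwa [abs_neg]))
    ⟨1 / 2, 1 / 2, by norm_num, by norm_num, by norm_num, by module⟩
  have : (δ / 2) • d = 0 := by simpa using heq
  exact (smul_eq_zero.1 this).resolve_left (half_pos hδ).ne'

def colSumMap : (Fin n → Fin m → ℝ) →ₗ[ℝ] Fin m → ℝ where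
  toFun d o := ∑ i, d i o
  map_add' d e := by ext o; simp [sum_add_distrib]
  map_smul' c d := by ext o; simp [mul_sum]

def utilityMap (v : Fin n → Fin m → ℝ) : (Fin n → Fin m → ℝ) →ₗ[ℝ] Fin n → ℝ where
  toFun d i := utility v d i
  map_add' d e := by ext i; simpa using utility_add_smul v d e 1 i
  map_smul' c d := by ext i; simpa using utility_add_smul v 0 d c i

theorem card_lt_card_image_fst_add_card_image_snd {v y : Fin n → Fin m → ℝ}
    (hy : NoHarmlessTransfer v y) {E : Finset (Fin n × Fin m)} (hE : ∀ q ∈ E, 0 < y q.1 q.2)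
    (hne : E.Nonempty) : #E < #(E.image Prod.fst) + #(E.image Prod.snd) := by
  set A := E.image Prod.fst
  set O := E.image Prod.snd
  let Φ : (E → ℝ) →ₗ[ℝ] (O → ℝ) × (A → ℝ) :=
    (LinearMap.funLeft ℝ ℝ Subtype.val ∘ₗ colSumMap ∘ₗ extendByZero E).prod
      (LinearMap.funLeft ℝ ℝ Subtype.val ∘ₗ utilityMap v ∘ₗ extendByZero E)
  have hcol (g : E → ℝ) (o : Fin m) (ho : o ∉ O) : ∑ i, extendByZero E g i o = 0 :=
    sum_eq_zero fun i _ => extendByZero_apply_of_notMem g fun h => ho (mem_image_of_mem _ h)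
  have hut (g : E → ℝ) (i : Fin n) (hi : i ∉ A) : utility v (extendByZero E g) i = 0 :=
    sum_eq_zero fun o _ => by
      rw [extendByZero_apply_of_notMem g fun h => hi (mem_image_of_mem _ h), mul_zero]
  have hzero (g : E → ℝ) (u : A → ℝ) (hu : 0 ≤ u) (hg : Φ g = (0, u)) :
      extendByZero E g = 0 := by
    obtain ⟨hgO, hgA⟩ := Prod.ext_iff.1 hg
    refine hy _ (fun i o h => hE (i, o) ?_) (fun o => ?_) (fun i => ?_)
    · by_contra hio
      exact h (extendByZero_apply_of_notMem g hio)
    · by_cases ho : o ∈ O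
      · exact congr_fun hgO ⟨o, ho⟩
      · exact hcol g o ho
    · by_cases hi : i ∈ A
      · exact (congr_fun hgA ⟨i, hi⟩).trans_ge (hu ⟨i, hi⟩)
      · exact (hut g i hi).ge
  have hinj : Function.Injective Φ := by
    refine (injective_iff_map_eq_zero Φ).2 fun g hg => extendByZero_injective ?_
    rw [hzero g 0 le_rfl hg, map_zero]
  have hrange : LinearMap.range Φ ≠ ⊤ := by
    obtain ⟨q, hq⟩ := hne
    intro htop
    obtain ⟨g, hg⟩ := LinearMap.range_eq_top.1 htop (0, 1)
    have h1 : utility v (extendByZero E g) q.1 = 1 :=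
      congr_fun (Prod.ext_iff.1 hg).2 ⟨q.1, mem_image_of_mem _ hq⟩
    rw [hzero g 1 zero_le_one hg, utility_zero] at h1
    exact zero_ne_one h1
  calc #E = Module.finrank ℝ (LinearMap.range Φ) := by
        rw [LinearMap.finrank_range_of_inj hinj, Module.finrank_fintype_fun_eq_card,
          Fintype.card_coe]
    _ < Module.finrank ℝ ((O → ℝ) × (A → ℝ)) := Submodule.finrank_lt hrange
    _ = #A + #O := by simp [Module.finrank_prod, add_comm]

noncomputable def consEdges (y : Fin n → Fin m → ℝ) : Finset (Fin n × Fin m) := {q | 0 < y q.1 q.2}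

theorem sharings_add_eq_card_consEdges {y : Fin n → Fin m → ℝ} (hy : IsAllocation y) :
    sharings y + m = #(consEdges y) := by
  have hcard : #(consEdges y) = ∑ o, #{i | 0 < y i o} := by
    simp only [consEdges, card_filter, Fintype.sum_prod_type]
    exact sum_comm
  have hpos (o : Fin m) : 1 ≤ #{i | 0 < y i o} := by
    obtain ⟨i, hi⟩ : ∃ i, 0 < y i o := by
      by_contra! h
      linarith [hy.2 o, sum_nonpos fun i (_ : i ∈ univ) => h i]
    exact card_pos.2 ⟨i, by simpa using hi⟩
  rw [hcard, sharings]
  calc ∑ o, (#{i | 0 < y i o} - 1) + m = ∑ o, (#{i | 0 < y i o} - 1 + 1) := by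
        simp [sum_add_distrib]
    _ = ∑ o, #{i | 0 < y i o} := sum_congr rfl fun o _ => Nat.sub_add_cancel (hpos o)

theorem sharings_le_of_noHarmlessTransfer {v y : Fin n → Fin m → ℝ} (hy : IsAllocation y)
    (hR : NoHarmlessTransfer v y) : sharings y ≤ n - 1 := by
  have hsum := sharings_add_eq_card_consEdges hy
  rcases (consEdges y).eq_empty_or_nonempty with h | h
  · rw [h, card_empty] at hsum
    omega
  · have hlt := card_lt_card_image_fst_add_card_image_snd hR (E := consEdges y)
      (fun q hq => (mem_filter.1 hq).2) h
    have hA := (card_le_univ ((consEdges y).image Prod.fst)).trans_eq (Fintype.card_fin n)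
    have hO := (card_le_univ ((consEdges y).image Prod.snd)).trans_eq (Fintype.card_fin m)
    omega

@[simp]
theorem consGraph_adj_inl_inr {y : Fin n → Fin m → ℝ} {i : Fin n} {o : Fin m} :
    (consGraph y).Adj (Sum.inl i) (Sum.inr o) ↔ 0 < y i o := by
  simp [consGraph]

theorem mem_edgeSet_consGraph {y : Fin n → Fin m → ℝ} {e : Sym2 (Fin n ⊕ Fin m)} :
    e ∈ (consGraph y).edgeSet ↔ ∃ i o, 0 < y i o ∧ s(Sum.inl i, Sum.inr o) = e := by
  induction e using Sym2.ind with | _ x w => ?_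
  rw [SimpleGraph.mem_edgeSet]
  constructor
  · rintro (⟨i, o, rfl, rfl, h⟩ | ⟨i, o, rfl, rfl, h⟩)
    · exact ⟨i, o, h, rfl⟩
    · exact ⟨i, o, h, Sym2.eq_swap⟩
  · rintro ⟨i, o, h, he⟩
    rcases Sym2.eq_iff.1 he with ⟨rfl, rfl⟩ | ⟨rfl, rfl⟩
    · exact consGraph_adj_inl_inr.2 h
    · exact (consGraph_adj_inl_inr.2 h).symm

theorem isAcyclic_consGraph_of_noHarmlessTransfer {v y : Fin n → Fin m → ℝ}
    (hR : NoHarmlessTransfer v y) : (consGraph y).IsAcyclic := by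
  intro a c hc
  set E : Finset (Fin n × Fin m) := {q | s(Sum.inl q.1, Sum.inr q.2) ∈ c.edges}
  have hmemE {q : Fin n × Fin m} : q ∈ E ↔ s(Sum.inl q.1, Sum.inr q.2) ∈ c.edges := by
    simp [E]
  have hEy (q) (hq : q ∈ E) : 0 < y q.1 q.2 :=
    consGraph_adj_inl_inr.1 (c.edges_subset_edgeSet (hmemE.1 hq))
  have hlen : c.length ≤ #E :=
    calc c.length = #c.edges.toFinset := by
          rw [List.toFinset_card_of_nodup hc.edges_nodup, c.length_edges]
      _ ≤ #(E.image fun q => s(Sum.inl q.1, Sum.inr q.2)) := card_le_card fun e he => by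
          rw [List.mem_toFinset] at he
          obtain ⟨i, o, -, rfl⟩ := mem_edgeSet_consGraph.1 (c.edges_subset_edgeSet he)
          exact mem_image_of_mem _ ((hmemE (q := (i, o))).2 he)
      _ ≤ #E := card_image_le
  have hverts : #(E.image Prod.fst) + #(E.image Prod.snd) ≤ c.length := by
    rw [← hc.card_toFinset_support, ← card_toLeft_add_card_toRight]
    gcongr
    · intro x hx
      obtain ⟨q, hq, rfl⟩ := mem_image.1 hx
      simpa using c.fst_mem_support_of_mem_edges (hmemE.1 hq)
    · intro x hx
      obtain ⟨q, hq, rfl⟩ := mem_image.1 hx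
      simpa using c.snd_mem_support_of_mem_edges (hmemE.1 hq)
  have hne : E.Nonempty := card_pos.1 (by have := hc.three_le_length; omega)
  have := card_lt_card_image_fst_add_card_image_snd hR hEy hne
  omega

end Allocations

/-- Every allocation is weakly dominated by an fPO allocation whose consumption graph
is acyclic and which has at most n-1 sharings. -/
theorem stmt5 {n m : ℕ} (v z : Fin n → Fin m → ℝ) (hz : IsAllocation z) :
    ∃ zs : Fin n → Fin m → ℝ, IsAllocation zs ∧ IsFPO v zs ∧
      (∀ i, utility v z i ≤ utility v zs i) ∧
      (consGraph zs).IsAcyclic ∧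
      sharings zs ≤ n - 1 := by
  have hD := isCompact_dominatingAllocations v z
  obtain ⟨y₀, hy₀, hmax₀⟩ :=
    hD.exists_isMaxOn ⟨z, hz, fun _ => le_rfl⟩ (continuous_welfare v).continuousOn
  obtain ⟨y, hy⟩ :=
    (hD.setOf_isMaxOn (continuous_welfare v)).extremePoints_nonempty ⟨y₀, hy₀, hmax₀⟩
  have hR := noHarmlessTransfer_of_mem_extremePoints hy
  obtain ⟨⟨hyD, hymax⟩, -⟩ := hy
  exact ⟨y, hyD.1, isFPO_of_isMaxOn_welfare hyD hymax, hyD.2,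
    isAcyclic_consGraph_of_noHarmlessTransfer hR, sharings_le_of_noHarmlessTransfer hyD.1 hR⟩
end

section
/- For a valuation matrix v with n agents and degree of degeneracy D(v), in any fractionally Pareto-optimal allocation each pair of distinct agents shares at most D(v)+1 objects; hence the total number of sharings is at most (D(v)+1)·n(n−1)/2. -/
/-!
Perturbing an allocation by moving a bundle `w` of objects from agent `j` to agent `i` changes
their utilities by `v i ⬝ᵥ w` and `-(v j ⬝ᵥ w)`, and for `w` supported on objects both agents
hold, a small positive multiple of `w` is feasible. Fractional Pareto optimality therefore forbids
any such `w` with `v i ⬝ᵥ w ≥ 0 ≥ v j ⬝ᵥ w` unless both vanish. Single-object bundles force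
`v i o` and `v j o` to have the same sign on shared objects; two-object bundles force the
vectors `(v i o, v j o)` of shared objects to be parallel, since otherwise one could solve
`v i ⬝ᵥ w = 1`, `v j ⬝ᵥ w = 0`. So all shared objects have one positive value ratio, and the
degeneracy bound caps their number. The total count follows by double counting pairs of holders,
since an object with `k` holders contributes `k - 1 ≤ k.choose 2` sharings.
-/

open Finset

open Filter Topology Matrix

section DoubleCounting

variable {ι κ : Type*} [Fintype ι] [DecidableEq ι] [Fintype κ]

theorem sum_card_powersetCard_eq (A : κ → Finset ι) (k : ℕ) :
    ∑ o, #((A o).powersetCard k) = ∑ p ∈ univ.powersetCard k, #{o | p ⊆ A o} := by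
  simp only [card_filter]
  rw [sum_comm]
  refine sum_congr rfl fun o _ => ?_
  rw [← card_filter]
  congr 1
  ext p
  simp [mem_powersetCard, and_comm]

theorem sum_choose_card_le (A : κ → Finset ι) (k c : ℕ)
    (h : ∀ p : Finset ι, #p = k → #{o | p ⊆ A o} ≤ c) :
    ∑ o, (#(A o)).choose k ≤ (Fintype.card ι).choose k * c := by
  simp only [← card_powersetCard, sum_card_powersetCard_eq]
  rw [← card_univ, ← card_powersetCard, ← smul_eq_mul]
  exact sum_le_card_nsmul _ _ _ fun p hp => h p (mem_powersetCard.1 hp).2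

end DoubleCounting

theorem Nat.sub_one_le_choose_two (k : ℕ) : k - 1 ≤ k.choose 2 := by
  cases k with
  | zero => simp
  | succ k => simp [Nat.choose_succ_succ]

theorem sharings_le_of_forall_card_le {n m : ℕ} (z : Fin n → Fin m → ℝ) (c : ℕ)
    (h : ∀ i j : Fin n, i ≠ j → #{o | 0 < z i o ∧ 0 < z j o} ≤ c) :
    sharings z ≤ c * (n * (n - 1) / 2) := by
  calc sharings z ≤ ∑ o, (#{i | 0 < z i o}).choose 2 :=
        sum_le_sum fun o _ => Nat.sub_one_le_choose_two _
    _ ≤ n.choose 2 * c := by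
        simpa using sum_choose_card_le (fun o => {i | 0 < z i o}) 2 c fun p hp => by
          obtain ⟨i, j, hij, rfl⟩ := card_eq_two.1 hp
          simpa [insert_subset_iff] using h i j hij
    _ = c * (n * (n - 1) / 2) := by rw [Nat.choose_two_right, mul_comm]

theorem exists_pos_mul_abs_le {ι : Type*} [Finite ι] {w g : ι → ℝ} (hg : ∀ o, 0 ≤ g o)
    (hw : ∀ o, w o ≠ 0 → 0 < g o) : ∃ t > 0, ∀ o, t * |w o| ≤ g o := by
  have h : ∀ o, ∀ᶠ t in 𝓝[>] (0 : ℝ), t * |w o| ≤ g o := by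
    intro o
    by_cases ho : w o = 0
    · simp [ho, hg o]
    · have : Tendsto (fun t : ℝ => t * |w o|) (𝓝[>] 0) (𝓝 0) := by
        have hc : Continuous fun t : ℝ => t * |w o| := by fun_prop
        exact (hc.tendsto' 0 0 (zero_mul _)).mono_left nhdsWithin_le_nhds
      exact this.eventually (ge_mem_nhds (hw o ho))
  obtain ⟨t, ht, ht0⟩ := ((eventually_all.2 h).and self_mem_nhdsWithin).exists
  exact ⟨t, ht0, ht⟩

section Transfer

variable {n m : ℕ}

def transfer (z : Fin n → Fin m → ℝ) (i j : Fin n) (w : Fin m → ℝ) : Fin n → Fin m → ℝ :=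
  z + Pi.single i w - Pi.single j w

theorem IsAllocation.transfer {z : Fin n → Fin m → ℝ} (hz : IsAllocation z) {i j : Fin n}
    {w : Fin m → ℝ} (hi : ∀ o, -w o ≤ z i o) (hj : ∀ o, w o ≤ z j o) :
    IsAllocation (transfer z i j w) := by
  constructor
  · intro a o
    simp only [_root_.transfer, Pi.add_apply, Pi.sub_apply, Pi.single_apply]
    split_ifs <;> subst_vars <;> simp <;> linarith [hz.1 a o, hi o, hj o]
  · intro o
    simp [_root_.transfer, sum_add_distrib, sum_sub_distrib, ← Finset.sum_apply, hz.2]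

theorem utility_transfer (v z : Fin n → Fin m → ℝ) (i j a : Fin n) (w : Fin m → ℝ) :
    utility v (transfer z i j w) a
      = utility v z a + (if a = i then v a ⬝ᵥ w else 0) - (if a = j then v a ⬝ᵥ w else 0) := by
  simp only [utility, transfer, Pi.add_apply, Pi.sub_apply, Pi.single_apply]
  split_ifs <;> simp [dotProduct, mul_add, mul_sub, sum_add_distrib, sum_sub_distrib]

end Transfer

namespace IsFPO

variable {n m : ℕ} {v z : Fin n → Fin m → ℝ} {i j : Fin n}

theorem dotProduct_eq_zero_of_transfer (hfpo : IsFPO v z) (hz : IsAllocation z) (hij : i ≠ j)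
    {w : Fin m → ℝ} (hw : ∀ o, w o ≠ 0 → 0 < z i o ∧ 0 < z j o)
    (hi : 0 ≤ v i ⬝ᵥ w) (hj : v j ⬝ᵥ w ≤ 0) : v i ⬝ᵥ w = 0 ∧ v j ⬝ᵥ w = 0 := by
  -- the conditions on `w` are invariant under scaling, and a small multiple of `w` is feasible
  obtain ⟨t, ht, hle⟩ := exists_pos_mul_abs_le (g := fun o => min (z i o) (z j o))
    (fun o => le_min (hz.1 i o) (hz.1 j o)) fun o ho => lt_min_iff.2 (hw o ho)
  have hy : IsAllocation (transfer z i j (t • w)) := by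
    have hmul (o) : |(t • w) o| ≤ min (z i o) (z j o) := by
      rw [Pi.smul_apply, smul_eq_mul, abs_mul, abs_of_pos ht]
      exact hle o
    exact hz.transfer (fun o => (neg_le_abs _).trans ((hmul o).trans (min_le_left _ _)))
      fun o => (le_abs_self _).trans ((hmul o).trans (min_le_right _ _))
  have hgain : ∀ a, utility v z a ≤ utility v (transfer z i j (t • w)) a := by
    intro a
    rw [utility_transfer, dotProduct_smul, smul_eq_mul]
    split_ifs with hai haj haj
    · exact absurd (hai.symm.trans haj) hij
    · subst hai; nlinarith
    · subst haj; nlinarith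
    · simp
  by_contra h
  refine hfpo ⟨_, hy, hgain, ?_⟩
  rcases not_and_or.1 h with h | h
  · refine ⟨i, ?_⟩
    rw [utility_transfer, if_pos rfl, if_neg hij, dotProduct_smul, smul_eq_mul]
    nlinarith [lt_of_le_of_ne hi (Ne.symm h)]
  · refine ⟨j, ?_⟩
    rw [utility_transfer, if_neg hij.symm, if_pos rfl, dotProduct_smul, smul_eq_mul]
    nlinarith [lt_of_le_of_ne hj h]

theorem mul_pos_or_eq_zero (hfpo : IsFPO v z) (hz : IsAllocation z) (hij : i ≠ j) {o : Fin m}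
    (ho : 0 < z i o ∧ 0 < z j o) : 0 < v i o * v j o ∨ v i o = 0 ∧ v j o = 0 := by
  have key (s : ℝ) (hi : 0 ≤ v i o * s) (hj : v j o * s ≤ 0) : v i o * s = 0 ∧ v j o * s = 0 := by
    simpa [dotProduct_single] using hfpo.dotProduct_eq_zero_of_transfer hz hij
      (w := Pi.single o s) (fun o' ho' => by
        by_cases h : o' = o
        · exact h ▸ ho
        · simp [h] at ho')
      (by simpa [dotProduct_single] using hi) (by simpa [dotProduct_single] using hj)
  have h₁ := key 1
  have h₂ := key (-1)
  simp only [mul_one, mul_neg, neg_nonneg, neg_nonpos, neg_eq_zero] at h₁ h₂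
  rcases lt_trichotomy (v i o) 0 with ha | ha | ha
  · have hb : v j o < 0 := lt_of_not_ge fun hb => ha.ne (h₂ ha.le hb).1
    exact Or.inl (mul_pos_of_neg_of_neg ha hb)
  · rcases le_total (v j o) 0 with hb | hb
    exacts [Or.inr (h₁ ha.ge hb), Or.inr (h₂ ha.le hb)]
  · have hb : 0 < v j o := lt_of_not_ge fun hb => ha.ne' (h₁ ha.le hb).1
    exact Or.inl (mul_pos ha hb)

theorem mul_eq_mul_of_shared (hfpo : IsFPO v z) (hz : IsAllocation z) (hij : i ≠ j) {o₁ o₂ : Fin m}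
    (h₁ : 0 < z i o₁ ∧ 0 < z j o₁) (h₂ : 0 < z i o₂ ∧ 0 < z j o₂) :
    v i o₁ * v j o₂ = v i o₂ * v j o₁ := by
  by_contra hne
  set Δ := v i o₁ * v j o₂ - v i o₂ * v j o₁
  have hΔ : Δ ≠ 0 := sub_ne_zero.2 hne
  -- this transfer raises `i`'s utility by `1` and leaves `j`'s unchanged
  set w : Fin m → ℝ := Pi.single o₁ (v j o₂ / Δ) + Pi.single o₂ (-v j o₁ / Δ)
  have hwi : v i ⬝ᵥ w = 1 := by
    simp only [w, dotProduct_add, dotProduct_single]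
    field_simp
    ring
  have hwj : v j ⬝ᵥ w = 0 := by
    simp only [w, dotProduct_add, dotProduct_single]
    field_simp
    ring
  have hw : ∀ o, w o ≠ 0 → 0 < z i o ∧ 0 < z j o := by
    intro o ho
    by_cases h : o = o₁
    · exact h ▸ h₁
    by_cases h' : o = o₂
    · exact h' ▸ h₂
    simp [w, h, h'] at ho
  exact one_ne_zero <| hwi.symm.trans
    (hfpo.dotProduct_eq_zero_of_transfer hz hij hw (hwi ▸ zero_le_one) hwj.le).1

theorem exists_pos_ratio (hfpo : IsFPO v z) (hz : IsAllocation z) (hij : i ≠ j) :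
    ∃ r > 0, ∀ o, 0 < z i o → 0 < z j o → v i o = r * v j o := by
  by_cases h : ∃ o, (0 < z i o ∧ 0 < z j o) ∧ v j o ≠ 0
  · obtain ⟨o₀, h₀, hv₀⟩ := h
    have hpos : 0 < v i o₀ * v j o₀ :=
      (hfpo.mul_pos_or_eq_zero hz hij h₀).resolve_right fun h => hv₀ h.2
    refine ⟨v i o₀ / v j o₀, div_pos_iff.2 (mul_pos_iff.1 hpos), fun o hio hjo => ?_⟩
    rw [div_mul_eq_mul_div, eq_div_iff hv₀, hfpo.mul_eq_mul_of_shared hz hij ⟨hio, hjo⟩ h₀]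
  · push Not at h
    refine ⟨1, one_pos, fun o hio hjo => ?_⟩
    have hv : v j o = 0 := h o ⟨hio, hjo⟩
    rcases hfpo.mul_pos_or_eq_zero hz hij ⟨hio, hjo⟩ with hpos | ⟨hi, _⟩
    · simp [hv] at hpos
    · simp [hi, hv]

end IsFPO

/-- With degeneracy degree at most D, in any fPO allocation each pair of agents shares at
most D+1 objects, and the total number of sharings is at most (D+1)·n(n-1)/2. -/
theorem stmt12 {n m : ℕ} (v z : Fin n → Fin m → ℝ) (D : ℕ)
    (hD : ∀ i j : Fin n, i ≠ j → ∀ r : ℝ, 0 < r →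
      (Finset.univ.filter (fun o : Fin m => v i o = r * v j o)).card ≤ D + 1)
    (hz : IsAllocation z) (hfpo : IsFPO v z) :
    (∀ i j : Fin n, i ≠ j →
      (Finset.univ.filter (fun o : Fin m => 0 < z i o ∧ 0 < z j o)).card ≤ D + 1) ∧
    sharings z ≤ (D + 1) * (n * (n - 1) / 2) := by
  have hpair (i j : Fin n) (hij : i ≠ j) : #{o | 0 < z i o ∧ 0 < z j o} ≤ D + 1 := by
    obtain ⟨r, hr, hratio⟩ := hfpo.exists_pos_ratio hz hij
    refine (card_le_card fun o ho => ?_).trans (hD i j hij r hr)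
    simp only [mem_filter, mem_univ, true_and] at ho ⊢
    exact hratio o ho.1 ho.2
  exact ⟨hpair, sharings_le_of_forall_card_le z (D + 1) hpair⟩
end
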